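/- Let F = ⟨f_1,…,f_r⟩ be a flip sequence realizing a shortest path from T_init to T_final, let f_{s_1},…,f_{s_l} be the source nodes (nodes with no incoming arcs) of the DAG D_F, and let I = {f_{s_1}^←,…,f_{s_l}^←} be their underlying diagonals in T_init. Then for every permutation π of I there exists a shortest path from T_init to T_final whose first l flips flip exactly the diagonals of I, in the order given by π. In other words, I is a safe-set. -/

import Mathlib

open Finset

/-- Two vertices of the convex `m`-gon are adjacent in the cyclic order. -/
def PolyAdj (m : ℕ) (a b : Fin m) : Prop :=
  (a.val + 1) % m = b.val ∨ (b.val + 1) % m = a.val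

/-- `e` is a diagonal of the convex `m`-gon: an unordered pair of distinct,
non-adjacent vertices. -/
def IsDiagonal (m : ℕ) (e : Finset (Fin m)) : Prop :=
  ∃ a b : Fin m, a ≠ b ∧ ¬ PolyAdj m a b ∧ e = {a, b}

/-- The cyclic distance from `a` to `x`, going forwards in the cyclic order. -/
def cycDist (m : ℕ) (a x : Fin m) : ℕ := (x.val + m - a.val) % m

/-- `x` lies strictly between `a` and `b` in the cyclic order. -/
def CycBtw (m : ℕ) (a x b : Fin m) : Prop :=
  0 < cycDist m a x ∧ cycDist m a x < cycDist m a b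

/-- Two chords cross: their endpoints strictly interleave in the cyclic order. -/
def Cross (m : ℕ) (e₁ e₂ : Finset (Fin m)) : Prop :=
  ∃ a b c d : Fin m, e₁ = {a, b} ∧ e₂ = {c, d} ∧ CycBtw m a c b ∧ CycBtw m b d a

/-- A triangulation of the convex `m`-gon: a maximal set of pairwise
non-crossing diagonals. -/
structure Triangulation (m : ℕ) where
  diagonals : Finset (Finset (Fin m))
  isDiagonal : ∀ e ∈ diagonals, IsDiagonal m e
  noncross : ∀ e₁ ∈ diagonals, ∀ e₂ ∈ diagonals, ¬ Cross m e₁ e₂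
  maximal : ∀ e, IsDiagonal m e → (∀ e' ∈ diagonals, ¬ Cross m e e') → e ∈ diagonals

/-- `e` is a side in the triangulation `T`: either an edge of the polygon
(between cyclically adjacent vertices) or a diagonal of `T`. -/
def IsSide (m : ℕ) (T : Triangulation m) (e : Finset (Fin m)) : Prop :=
  (∃ a b : Fin m, PolyAdj m a b ∧ e = {a, b}) ∨ e ∈ T.diagonals

/-- `t` is a triangle of the triangulation `T`: three distinct vertices each
pair of which forms a side of `T`. -/
def IsTriangle (m : ℕ) (T : Triangulation m) (t : Finset (Fin m)) : Prop :=
  ∃ a b c : Fin m, a ≠ b ∧ a ≠ c ∧ b ≠ c ∧ t = {a, b, c} ∧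
    IsSide m T {a, b} ∧ IsSide m T {a, c} ∧ IsSide m T {b, c}

/-- Two diagonals of `T` are neighbors if they both belong to `T` and lie on a
common triangle of `T`; they are independent otherwise. -/
def Neighbor (m : ℕ) (T : Triangulation m) (e₁ e₂ : Finset (Fin m)) : Prop :=
  e₁ ∈ T.diagonals ∧ e₂ ∈ T.diagonals ∧
    ∃ t, IsTriangle m T t ∧ e₁ ⊆ t ∧ e₂ ⊆ t

/-- `T'` is obtained from `T` by flipping the diagonal `e`, which removes `e`
and creates the new diagonal `e'` (necessarily the opposite diagonal of the
quadrilateral formed by the two triangles of `T` containing `e`, since `T'` is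
again a triangulation). -/
def IsFlip (m : ℕ) (T T' : Triangulation m) (e e' : Finset (Fin m)) : Prop :=
  e ∈ T.diagonals ∧ e' ∉ T.diagonals ∧
    T'.diagonals = insert e' (T.diagonals.erase e)

/-- `Ts 0, Ts 1, …, Ts r` is a sequence of triangulations in which `Ts (i+1)`
is obtained from `Ts i` by performing the flip `F i`, which removes the
diagonal `(F i).1` and creates the diagonal `(F i).2`. -/
def IsFlipSeq (m r : ℕ) (F : ℕ → Finset (Fin m) × Finset (Fin m))
    (Ts : ℕ → Triangulation m) : Prop :=
  ∀ i < r, IsFlip m (Ts i) (Ts (i + 1)) (F i).1 (F i).2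

/-- The flip distance between two triangulations: the minimum length of a flip
sequence transforming one into the other. -/
noncomputable def FlipDist (m : ℕ) (T T' : Triangulation m) : ℕ :=
  sInf {r | ∃ F Ts, IsFlipSeq m r F Ts ∧ Ts 0 = T ∧ Ts r = T'}

/-- `e` is a free-diagonal of `T` with respect to `Tfinal`: flipping `e` in `T`
creates a diagonal belonging to `Tfinal`. -/
def FreeDiagonal (m : ℕ) (T Tfinal : Triangulation m) (e : Finset (Fin m)) : Prop :=
  ∃ T' e', IsFlip m T T' e e' ∧ e' ∈ Tfinal.diagonals

/-- Arc of the DAG `D_F` associated to the flip sequence `F` with triangulation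
sequence `Ts`: there is an arc from flip `i` to flip `j` when `i < j` and the
diagonal created by flip `i` is a neighbor of the diagonal removed by flip `j`
in the triangulation `Ts j` in which flip `j` is performed. -/
def Arc (m r : ℕ) (F : ℕ → Finset (Fin m) × Finset (Fin m))
    (Ts : ℕ → Triangulation m) (i j : ℕ) : Prop :=
  i < j ∧ j < r ∧ Neighbor m (Ts j) (F i).2 (F j).1

/-- Flip `i` is a source node of the DAG `D_F`: a node with no incoming arcs. -/
def IsSource (m r : ℕ) (F : ℕ → Finset (Fin m) × Finset (Fin m))
    (Ts : ℕ → Triangulation m) (i : ℕ) : Prop :=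
  i < r ∧ ∀ j, ¬ Arc m r F Ts j i

/-!
A source flip `f_k` removes a diagonal whose two triangles are untouched by all earlier flips:
a flip creating a side of one of them would be the tail of an arc into `f_k`. So this diagonal,
with the same quadrilateral around it, is present in every `T_i` with `i ≤ k`, and the diagonals
of distinct sources are independent there. Flipping a diagonal does not change the triangles on
the diagonals independent of it, so independent flips can be performed one after the other in
any order. Flip the chosen sources first, in the prescribed order. At every time `i`, the
triangulation obtained from `T_i` by flipping the sources still pending differs from `T_i` only
on diagonals untouched by `f_i`, so the remaining flips of `F` can follow in their original order.
The new sequence has the same length `r` as `F`.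
-/

theorem Finset.pair_eq_pair_iff {α : Type*} [DecidableEq α] {a b c d : α} :
    ({a, b} : Finset α) = {c, d} ↔ a = c ∧ b = d ∨ a = d ∧ b = c := by
  rw [← Finset.coe_inj, Finset.coe_pair, Finset.coe_pair, Set.pair_eq_pair_iff]

section Polygon

variable {m : ℕ}

theorem cycDist_eq_ite (a x : Fin m) :
    cycDist m a x = if a.val ≤ x.val then x.val - a.val else x.val + m - a.val := by
  have := x.isLt
  unfold cycDist
  split_ifs with h
  · rw [show x.val + m - a.val = x.val - a.val + m by omega, Nat.add_mod_right,
      Nat.mod_eq_of_lt (by omega)]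
  · exact Nat.mod_eq_of_lt (by omega)

theorem cycBtw_iff {a x b : Fin m} : CycBtw m a x b ↔
    a.val < x.val ∧ x.val < b.val ∨ b.val < a.val ∧ a.val < x.val ∨
      x.val < b.val ∧ b.val < a.val := by
  have := a.isLt; have := b.isLt; have := x.isLt
  simp only [CycBtw, cycDist_eq_ite]
  split_ifs <;> omega

theorem polyAdj_iff {a b : Fin m} : PolyAdj m a b ↔
    a.val + 1 = b.val ∨ b.val + 1 = a.val ∨ a.val + 1 = m ∧ b.val = 0 ∨
      b.val + 1 = m ∧ a.val = 0 := by
  have succ_mod : ∀ x : Fin m, (x.val + 1) % m = if x.val + 1 = m then 0 else x.val + 1 := by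
    intro x
    split_ifs with h
    · rw [h, Nat.mod_self]
    · exact Nat.mod_eq_of_lt (by have := x.isLt; omega)
  simp only [PolyAdj, succ_mod]
  split_ifs <;> omega

theorem PolyAdj.symm {a b : Fin m} (h : PolyAdj m a b) : PolyAdj m b a := Or.symm h

theorem isDiagonal_pair_iff {a b : Fin m} :
    IsDiagonal m {a, b} ↔ a ≠ b ∧ ¬ PolyAdj m a b := by
  constructor
  · rintro ⟨x, y, hxy, hadj, he⟩
    rcases Finset.pair_eq_pair_iff.mp he with ⟨rfl, rfl⟩ | ⟨rfl, rfl⟩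
    · exact ⟨hxy, hadj⟩
    · exact ⟨hxy.symm, fun h => hadj h.symm⟩
  · rintro ⟨hab, hadj⟩
    exact ⟨a, b, hab, hadj, rfl⟩

theorem isDiagonal_pair_of_cycBtw {a b c d : Fin m} (hc : CycBtw m a c b)
    (hd : CycBtw m b d a) : IsDiagonal m {c, d} := by
  rw [isDiagonal_pair_iff, polyAdj_iff, Ne, Fin.ext_iff]
  rw [cycBtw_iff] at hc hd
  omega

theorem cycBtw_or_cycBtw {a b x : Fin m} (hxa : x ≠ a) (hxb : x ≠ b) (hab : a ≠ b) :
    CycBtw m a x b ∨ CycBtw m b x a := by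
  simp only [cycBtw_iff, Ne, Fin.ext_iff] at *
  omega

theorem cross_pair_iff {a b : Fin m} {e : Finset (Fin m)} :
    Cross m {a, b} e ↔ ∃ u v, e = {u, v} ∧ CycBtw m a u b ∧ CycBtw m b v a := by
  constructor
  · rintro ⟨a', b', c, d, hab, rfl, hc, hd⟩
    rcases Finset.pair_eq_pair_iff.mp hab with ⟨rfl, rfl⟩ | ⟨rfl, rfl⟩
    · exact ⟨c, d, rfl, hc, hd⟩
    · exact ⟨d, c, Finset.pair_comm c d, hd, hc⟩
  · rintro ⟨u, v, rfl, hu, hv⟩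
    exact ⟨a, b, u, v, rfl, rfl, hu, hv⟩

theorem Cross.symm {e₁ e₂ : Finset (Fin m)} (h : Cross m e₁ e₂) : Cross m e₂ e₁ := by
  obtain ⟨a, b, c, d, rfl, rfl, hc, hd⟩ := h
  refine ⟨c, d, b, a, rfl, Finset.pair_comm a b, ?_, ?_⟩ <;>
  · rw [cycBtw_iff] at *
    omega

theorem not_cross_of_polyAdj {a b : Fin m} (hadj : PolyAdj m a b) (e : Finset (Fin m)) :
    ¬ Cross m {a, b} e := by
  rw [cross_pair_iff]
  rintro ⟨u, v, -, hu, hv⟩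
  rw [cycBtw_iff] at hu hv
  rw [polyAdj_iff] at hadj
  omega

theorem not_cross_self (e : Finset (Fin m)) : ¬ Cross m e e := by
  rintro ⟨a, b, c, d, rfl, he, hc, hd⟩
  rw [cycBtw_iff] at hc hd
  rcases Finset.pair_eq_pair_iff.mp he with ⟨rfl, rfl⟩ | ⟨rfl, rfl⟩ <;> omega

theorem IsSide.not_cross {T : Triangulation m} {e₁ e₂ : Finset (Fin m)}
    (h₁ : IsSide m T e₁) (h₂ : IsSide m T e₂) : ¬ Cross m e₁ e₂ := by
  rcases h₁ with ⟨a, b, hadj, rfl⟩ | h₁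
  · exact not_cross_of_polyAdj hadj e₂
  rcases h₂ with ⟨a, b, hadj, rfl⟩ | h₂
  · exact fun h => not_cross_of_polyAdj hadj e₁ h.symm
  exact T.noncross _ h₁ _ h₂

end Polygon

section Triangles

variable {m : ℕ} {T : Triangulation m}

theorem Triangulation.ext {T T' : Triangulation m} (h : T.diagonals = T'.diagonals) :
    T = T' := by
  cases T; cases T'; simpa using h

theorem IsSide.mem_diagonals {e : Finset (Fin m)} (hs : IsSide m T e) (hd : IsDiagonal m e) :
    e ∈ T.diagonals := by
  rcases hs with ⟨a, b, hadj, rfl⟩ | h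
  · exact absurd hadj (isDiagonal_pair_iff.mp hd).2
  · exact h

theorem IsTriangle.isSide {t : Finset (Fin m)} (ht : IsTriangle m T t) {x y : Fin m}
    (hx : x ∈ t) (hy : y ∈ t) (hxy : x ≠ y) : IsSide m T {x, y} := by
  obtain ⟨a, b, c, -, -, -, rfl, hab, hac, hbc⟩ := ht
  simp only [Finset.mem_insert, Finset.mem_singleton] at hx hy
  rcases hx with rfl | rfl | rfl <;> rcases hy with rfl | rfl | rfl <;>
    first | exact absurd rfl hxy | assumption | rwa [Finset.pair_comm]

theorem IsTriangle.mem_diagonals_of_subset {t g : Finset (Fin m)} (ht : IsTriangle m T t)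
    (hg : IsDiagonal m g) (hgt : g ⊆ t) : g ∈ T.diagonals := by
  obtain ⟨x, y, hxy, hadj, rfl⟩ := hg
  exact (ht.isSide (hgt (by simp)) (hgt (by simp)) hxy).mem_diagonals ⟨x, y, hxy, hadj, rfl⟩

theorem IsTriangle.exists_eq_insert_pair {t : Finset (Fin m)} (ht : IsTriangle m T t)
    {x y : Fin m} (hxy : x ≠ y) (hsub : {x, y} ⊆ t) :
    ∃ w, w ≠ x ∧ w ≠ y ∧ t = {x, y, w} := by
  obtain ⟨a, b, c, hab, hac, hbc, rfl, -⟩ := ht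
  have hx : x ∈ ({a, b, c} : Finset (Fin m)) := hsub (by simp)
  have hy : y ∈ ({a, b, c} : Finset (Fin m)) := hsub (by simp)
  simp only [Finset.mem_insert, Finset.mem_singleton] at hx hy
  rcases hx with rfl | rfl | rfl <;> rcases hy with rfl | rfl | rfl <;>
    first
    | exact absurd rfl hxy
    | exact ⟨a, by simp_all [eq_comm], by simp_all [eq_comm],
        by ext; simp only [Finset.mem_insert, Finset.mem_singleton]; tauto⟩
    | exact ⟨b, by simp_all [eq_comm], by simp_all [eq_comm],
        by ext; simp only [Finset.mem_insert, Finset.mem_singleton]; tauto⟩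
    | exact ⟨c, by simp_all [eq_comm], by simp_all [eq_comm],
        by ext; simp only [Finset.mem_insert, Finset.mem_singleton] <;> tauto⟩

namespace Triangulation

/-- `c` is the apex of the triangle of `T` on the side of `{a, b}` swept from `a` to `b`. -/
def IsApex (T : Triangulation m) (a b c : Fin m) : Prop :=
  CycBtw m a c b ∧ IsSide m T {a, c} ∧ IsSide m T {c, b}

theorem IsApex.isTriangle {a b c : Fin m} (hab : {a, b} ∈ T.diagonals) (h : T.IsApex a b c) :
    IsTriangle m T {a, b, c} := by
  obtain ⟨hc, hac, hcb⟩ := h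
  rw [cycBtw_iff] at hc
  refine ⟨a, b, c, ?_, ?_, ?_, rfl, Or.inr hab, hac, Finset.pair_comm c b ▸ hcb⟩ <;>
    (rw [Ne, Fin.ext_iff]; omega)

/-- Take `c` in `(a, b)` farthest from `a` with `{a, c}` a side: a diagonal crossing `{c, b}`
would cross `{a, c}` or `{a, b}`, or end at `a` and contradict the choice of `c`. -/
theorem exists_isApex (T : Triangulation m) {a b : Fin m} (hab : {a, b} ∈ T.diagonals) :
    ∃ c, T.IsApex a b c := by
  classical
  obtain ⟨hne, hadj⟩ := isDiagonal_pair_iff.mp (T.isDiagonal _ hab)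
  have ha := a.isLt; have hb := b.isLt
  rw [polyAdj_iff] at hadj
  rw [Ne, Fin.ext_iff] at hne
  let a' : Fin m := ⟨(a.val + 1) % m, Nat.mod_lt _ (by omega)⟩
  have ha' : a'.val = if a.val + 1 = m then 0 else a.val + 1 := by
    split_ifs with h
    · simp only [a', h, Nat.mod_self]
    · exact Nat.mod_eq_of_lt (by omega)
  obtain ⟨c, hcS, hmax⟩ := Finset.exists_max_image
    (Finset.univ.filter fun c => CycBtw m a c b ∧ IsSide m T {a, c}) (cycDist m a)
    ⟨a', Finset.mem_filter.mpr ⟨Finset.mem_univ _,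
      by rw [cycBtw_iff]; split_ifs at ha' <;> omega, Or.inl ⟨a, a', Or.inl rfl, rfl⟩⟩⟩
  obtain ⟨-, hc, hac⟩ := Finset.mem_filter.mp hcS
  refine ⟨c, hc, hac, ?_⟩
  by_contra hcb
  have hcb_diag : IsDiagonal m {c, b} := by
    refine isDiagonal_pair_iff.mpr ⟨?_, fun h => hcb (Or.inl ⟨c, b, h, rfl⟩)⟩
    rw [cycBtw_iff] at hc
    rw [Ne, Fin.ext_iff]; omega
  obtain ⟨t, ht, hcross⟩ : ∃ t ∈ T.diagonals, Cross m {c, b} t := by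
    by_contra! h
    exact hcb (Or.inr (T.maximal _ hcb_diag h))
  obtain ⟨u, v, rfl, hu, hv⟩ := cross_pair_iff.mp hcross
  have hcv := c.isLt; have hu' := u.isLt; have hv' := v.isLt
  rw [cycBtw_iff] at hc hu hv
  rcases (by rw [Fin.ext_iff, cycBtw_iff, cycBtw_iff]; omega :
      v = a ∨ CycBtw m a v c ∨ CycBtw m b v a) with rfl | hv | hv
  · have hle := hmax u (Finset.mem_filter.mpr ⟨Finset.mem_univ _,
      by rw [cycBtw_iff]; omega, Or.inr (Finset.pair_comm u v ▸ ht)⟩)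
    simp only [cycDist_eq_ite] at hle
    split_ifs at hle <;> omega
  · refine hac.not_cross (Or.inr ht) (cross_pair_iff.mpr ⟨v, u, Finset.pair_comm u v, hv, ?_⟩)
    rw [cycBtw_iff] at hv ⊢; omega
  · refine T.noncross _ hab _ ht (cross_pair_iff.mpr ⟨u, v, rfl, ?_, hv⟩)
    rw [cycBtw_iff]; omega

theorem IsApex.unique {a b c c' : Fin m} (h : T.IsApex a b c) (h' : T.IsApex a b c') :
    c = c' := by
  obtain ⟨hc, hac, hcb⟩ := h
  obtain ⟨hc', hac', hcb'⟩ := h'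
  rcases (by rw [Fin.ext_iff, cycBtw_iff, cycBtw_iff]; rw [cycBtw_iff] at hc hc'; omega :
      c = c' ∨ CycBtw m a c c' ∨ CycBtw m a c' c) with h | h | h
  · exact h
  · refine absurd (cross_pair_iff.mpr ⟨c, b, rfl, h, ?_⟩) (hac'.not_cross hcb)
    rw [cycBtw_iff] at hc hc' h ⊢; omega
  · refine absurd (cross_pair_iff.mpr ⟨c', b, rfl, h, ?_⟩) (hac.not_cross hcb')
    rw [cycBtw_iff] at hc hc' h ⊢; omega

end Triangulation

theorem IsTriangle.exists_isApex {t : Finset (Fin m)} (ht : IsTriangle m T t) {x y : Fin m}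
    (hxy : x ≠ y) (hsub : {x, y} ⊆ t) :
    ∃ w, t = {x, y, w} ∧ (T.IsApex x y w ∨ T.IsApex y x w) := by
  obtain ⟨w, hwx, hwy, rfl⟩ := ht.exists_eq_insert_pair hxy hsub
  have hxw : IsSide m T {x, w} := ht.isSide (by simp) (by simp) hwx.symm
  have hyw : IsSide m T {y, w} := ht.isSide (by simp) (by simp) hwy.symm
  rcases cycBtw_or_cycBtw hwx hwy hxy with h | h
  · exact ⟨w, rfl, Or.inl ⟨h, hxw, Finset.pair_comm y w ▸ hyw⟩⟩
  · exact ⟨w, rfl, Or.inr ⟨h, hyw, Finset.pair_comm x w ▸ hxw⟩⟩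

theorem Neighbor.symm {e₁ e₂ : Finset (Fin m)} (h : Neighbor m T e₁ e₂) :
    Neighbor m T e₂ e₁ :=
  let ⟨h₁, h₂, t, ht, hs₁, hs₂⟩ := h
  ⟨h₂, h₁, t, ht, hs₂, hs₁⟩

theorem neighbor_self {e : Finset (Fin m)} (he : e ∈ T.diagonals) : Neighbor m T e e := by
  obtain ⟨a, b, -, -, rfl⟩ := T.isDiagonal _ he
  obtain ⟨c, hc⟩ := T.exists_isApex he
  have hsub : ({a, b} : Finset (Fin m)) ⊆ {a, b, c} := by simp [Finset.insert_subset_iff]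
  exact ⟨he, he, _, hc.isTriangle he, hsub, hsub⟩

end Triangles

section Flips

variable {m : ℕ} {T T' : Triangulation m}

namespace Triangulation

/-- `d` is the other diagonal of the quadrilateral formed by the two triangles of `T` on `e`. -/
def IsOpposite (T : Triangulation m) (e d : Finset (Fin m)) : Prop :=
  ∃ a b c c', e = {a, b} ∧ T.IsApex a b c ∧ T.IsApex b a c' ∧ d = {c, c'}

theorem IsApex.not_cross {a b c d : Fin m} (hc : T.IsApex a b c) (hd : T.IsApex b a d)
    {t : Finset (Fin m)} (ht : t ∈ T.diagonals) (hne : t ≠ {a, b}) : ¬ Cross m {c, d} t := by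
  obtain ⟨hc, hac, hcb⟩ := hc
  obtain ⟨hd, hbd, hda⟩ := hd
  rw [cross_pair_iff]
  rintro ⟨u, v, rfl, hu, hv⟩
  have hts : IsSide m T {u, v} := Or.inr ht
  rw [cycBtw_iff] at hc hd hu hv
  rcases (show CycBtw m c u b ∨ CycBtw m b u d ∨ u = b by
      rw [Fin.ext_iff, cycBtw_iff, cycBtw_iff]; omega) with hu' | hu' | rfl
  · refine hcb.not_cross hts (cross_pair_iff.mpr ⟨u, v, rfl, hu', ?_⟩)
    rw [cycBtw_iff] at hu' ⊢; omega
  · refine hbd.not_cross hts (cross_pair_iff.mpr ⟨u, v, rfl, hu', ?_⟩)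
    rw [cycBtw_iff] at hu' ⊢; omega
  rcases (show CycBtw m d v a ∨ CycBtw m a v c ∨ v = a by
      rw [Fin.ext_iff, cycBtw_iff, cycBtw_iff]; omega) with hv' | hv' | rfl
  · refine hda.not_cross hts (cross_pair_iff.mpr ⟨v, u, Finset.pair_comm u v, hv', ?_⟩)
    rw [cycBtw_iff] at hv' ⊢; omega
  · refine hac.not_cross hts (cross_pair_iff.mpr ⟨v, u, Finset.pair_comm u v, hv', ?_⟩)
    rw [cycBtw_iff] at hv' ⊢; omega
  · exact hne (Finset.pair_comm u v)

theorem IsApex.eq_of_cross {a b c d : Fin m} (hc : T.IsApex a b c) (hd : T.IsApex b a d)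
    {g : Finset (Fin m)} (hg : Cross m {a, b} g)
    (hnc : ∀ t ∈ T.diagonals, t ≠ {a, b} → ¬ Cross m t g) : g = {c, d} := by
  have hside : ∀ s, IsSide m T s → s ≠ {a, b} → ¬ Cross m s g := by
    rintro s (⟨x, y, hadj, rfl⟩ | hs) hne
    · exact not_cross_of_polyAdj hadj g
    · exact hnc s hs hne
  obtain ⟨hc, hac, hcb⟩ := hc
  obtain ⟨hd, hbd, hda⟩ := hd
  obtain ⟨u, v, rfl, hu, hv⟩ := cross_pair_iff.mp hg
  rw [cycBtw_iff] at hc hd hu hv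
  have huc : u = c := by
    by_contra! hne
    rw [Ne, Fin.ext_iff] at hne
    rcases (show CycBtw m a u c ∨ CycBtw m c u b by rw [cycBtw_iff, cycBtw_iff]; omega)
      with h | h
    · refine hside _ hac ?_ (cross_pair_iff.mpr ⟨u, v, rfl, h, ?_⟩)
      · simp only [Ne, Finset.pair_eq_pair_iff, Fin.ext_iff]; omega
      · rw [cycBtw_iff] at h ⊢; omega
    · refine hside _ hcb ?_ (cross_pair_iff.mpr ⟨u, v, rfl, h, ?_⟩)
      · simp only [Ne, Finset.pair_eq_pair_iff, Fin.ext_iff]; omega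
      · rw [cycBtw_iff] at h ⊢; omega
  have hvd : v = d := by
    by_contra! hne
    rw [Ne, Fin.ext_iff] at hne
    rcases (show CycBtw m b v d ∨ CycBtw m d v a by rw [cycBtw_iff, cycBtw_iff]; omega)
      with h | h
    · refine hside _ hbd ?_ (cross_pair_iff.mpr ⟨v, u, Finset.pair_comm u v, h, ?_⟩)
      · simp only [Ne, Finset.pair_eq_pair_iff, Fin.ext_iff]; omega
      · rw [cycBtw_iff] at h ⊢; omega
    · refine hside _ hda ?_ (cross_pair_iff.mpr ⟨v, u, Finset.pair_comm u v, h, ?_⟩)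
      · simp only [Ne, Finset.pair_eq_pair_iff, Fin.ext_iff]; omega
      · rw [cycBtw_iff] at h ⊢; omega
  rw [huc, hvd]

theorem IsOpposite.cross {e d : Finset (Fin m)} (h : T.IsOpposite e d) : Cross m e d := by
  obtain ⟨a, b, c, c', rfl, hc, hc', rfl⟩ := h
  exact cross_pair_iff.mpr ⟨c, c', rfl, hc.1, hc'.1⟩

theorem IsOpposite.not_mem {e d : Finset (Fin m)} (he : e ∈ T.diagonals)
    (h : T.IsOpposite e d) : d ∉ T.diagonals :=
  fun hd => T.noncross _ he _ hd h.cross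

theorem IsOpposite.exists_isFlip {e d : Finset (Fin m)} (he : e ∈ T.diagonals)
    (h : T.IsOpposite e d) : ∃ T', IsFlip m T T' e d := by
  obtain ⟨a, b, c, c', rfl, hc, hc', rfl⟩ := h
  have hcross : Cross m {a, b} {c, c'} := IsOpposite.cross ⟨a, b, c, c', rfl, hc, hc', rfl⟩
  refine ⟨⟨insert {c, c'} (T.diagonals.erase {a, b}), ?_, ?_, ?_⟩,
    he, fun hd => T.noncross _ he _ hd hcross, rfl⟩
  · intro g hg
    rcases Finset.mem_insert.mp hg with rfl | hg
    · exact isDiagonal_pair_of_cycBtw hc.1 hc'.1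
    · exact T.isDiagonal _ (Finset.mem_of_mem_erase hg)
  · intro g₁ hg₁ g₂ hg₂
    rcases Finset.mem_insert.mp hg₁ with rfl | hg₁ <;>
      rcases Finset.mem_insert.mp hg₂ with rfl | hg₂
    · exact not_cross_self _
    · exact hc.not_cross hc' (Finset.mem_of_mem_erase hg₂) (Finset.ne_of_mem_erase hg₂)
    · exact fun h => hc.not_cross hc' (Finset.mem_of_mem_erase hg₁)
        (Finset.ne_of_mem_erase hg₁) h.symm
    · exact T.noncross _ (Finset.mem_of_mem_erase hg₁) _ (Finset.mem_of_mem_erase hg₂)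
  · intro g hg hnc
    have hnc' : ∀ t ∈ T.diagonals, t ≠ {a, b} → ¬ Cross m t g := fun t ht hne h =>
      hnc t (Finset.mem_insert_of_mem (Finset.mem_erase.mpr ⟨hne, ht⟩)) h.symm
    by_cases hgab : Cross m {a, b} g
    · rw [hc.eq_of_cross hc' hgab hnc']
      exact Finset.mem_insert_self _ _
    have hgT : g ∈ T.diagonals := T.maximal g hg fun t ht htab => by
      by_cases hte : t = {a, b}
      · exact hgab (hte ▸ htab.symm)
      · exact hnc' t ht hte htab.symm
    have hne : g ≠ {a, b} := by
      rintro rfl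
      exact hnc _ (Finset.mem_insert_self _ _) hcross
    exact Finset.mem_insert_of_mem (Finset.mem_erase.mpr ⟨hne, hgT⟩)

end Triangulation

theorem IsFlip.mem_of_ne {e e' g : Finset (Fin m)} (hf : IsFlip m T T' e e')
    (hg : g ∈ T.diagonals) (hne : g ≠ e) : g ∈ T'.diagonals :=
  hf.2.2 ▸ Finset.mem_insert_of_mem (Finset.mem_erase.mpr ⟨hne, hg⟩)

theorem IsFlip.snd_mem {e e' : Finset (Fin m)} (hf : IsFlip m T T' e e') :
    e' ∈ T'.diagonals :=
  hf.2.2 ▸ Finset.mem_insert_self _ _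

theorem IsFlip.symm {e e' : Finset (Fin m)} (hf : IsFlip m T T' e e') : IsFlip m T' T e' e := by
  obtain ⟨he, he', hT'⟩ := hf
  have hne : e' ≠ e := fun h => he' (h ▸ he)
  refine ⟨hT' ▸ Finset.mem_insert_self _ _, ?_, ?_⟩
  · rw [hT', Finset.mem_insert, Finset.mem_erase]
    tauto
  · rw [hT', Finset.erase_insert (fun h => he' (Finset.mem_of_mem_erase h)),
      Finset.insert_erase he]

theorem IsFlip.isOpposite {e e' : Finset (Fin m)} (hf : IsFlip m T T' e e') :
    T.IsOpposite e e' := by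
  obtain ⟨a, b, -, -, rfl⟩ := T.isDiagonal _ hf.1
  obtain ⟨c, hc⟩ := T.exists_isApex hf.1
  obtain ⟨c', hc'⟩ := T.exists_isApex (Finset.pair_comm a b ▸ hf.1)
  have hnc : ∀ t ∈ T.diagonals, t ≠ {a, b} → ¬ Cross m t e' := fun t ht hne h =>
    T'.noncross _ (hf.mem_of_ne ht hne) _ hf.snd_mem h
  have hcross : Cross m {a, b} e' := by
    by_contra hno
    refine hf.2.1 (T.maximal e' (T'.isDiagonal _ hf.snd_mem) fun t ht h => ?_)
    by_cases hte : t = {a, b}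
    · exact hno (hte ▸ h.symm)
    · exact hnc t ht hte h.symm
  exact ⟨a, b, c, c', rfl, hc, hc', hc.eq_of_cross hc' hcross hnc⟩

namespace Triangulation

def SameApexes (T T' : Triangulation m) (g : Finset (Fin m)) : Prop :=
  ∀ a b c, g = {a, b} → (T.IsApex a b c ↔ T'.IsApex a b c)

theorem SameApexes.symm {g : Finset (Fin m)} (h : T.SameApexes T' g) : T'.SameApexes T g :=
  fun a b c hg => (h a b c hg).symm

theorem SameApexes.trans {T'' : Triangulation m} {g : Finset (Fin m)} (h : T.SameApexes T' g)
    (h' : T'.SameApexes T'' g) : T.SameApexes T'' g :=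
  fun a b c hg => (h a b c hg).trans (h' a b c hg)

theorem SameApexes.isOpposite {g d : Finset (Fin m)} (h : T.SameApexes T' g)
    (hd : T.IsOpposite g d) : T'.IsOpposite g d := by
  obtain ⟨a, b, c, c', rfl, hc, hc', rfl⟩ := hd
  exact ⟨a, b, c, c', rfl, (h a b c rfl).mp hc,
    (h b a c' (Finset.pair_comm a b)).mp hc', rfl⟩

theorem SameApexes.neighbor {g h : Finset (Fin m)} (hs : T.SameApexes T' g)
    (hg : g ∈ T'.diagonals) (hn : Neighbor m T h g) : Neighbor m T' h g := by
  obtain ⟨hh, hgT, t, ht, hht, hgt⟩ := hn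
  obtain ⟨x, y, hxy, -, rfl⟩ := T.isDiagonal _ hgT
  obtain ⟨w, rfl, hw⟩ := ht.exists_isApex hxy hgt
  have ht' : IsTriangle m T' {x, y, w} := by
    rcases hw with hw | hw
    · exact ((hs x y w rfl).mp hw).isTriangle hg
    · rw [Finset.insert_comm]
      exact ((hs y x w (Finset.pair_comm x y)).mp hw).isTriangle (Finset.pair_comm x y ▸ hg)
  exact ⟨ht'.mem_diagonals_of_subset (T.isDiagonal _ hh) hht, hg, _, ht', hht, hgt⟩

end Triangulation

theorem IsFlip.sameApexes {f f' g : Finset (Fin m)} (hf : IsFlip m T T' f f')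
    (hg : g ∈ T.diagonals) (hfg : ¬ Neighbor m T f g) : T.SameApexes T' g := by
  rintro a b c rfl
  have preserve : ∀ c, T.IsApex a b c → T'.IsApex a b c := by
    intro c hc
    have hside : ∀ s ⊆ ({a, b, c} : Finset (Fin m)), IsSide m T s → IsSide m T' s := by
      rintro s hs (hedge | hsT)
      · exact Or.inl hedge
      · refine Or.inr (hf.mem_of_ne hsT ?_)
        rintro rfl
        exact hfg ⟨hsT, hg, _, hc.isTriangle hg, hs, by simp [Finset.insert_subset_iff]⟩
    exact ⟨hc.1, hside _ (by simp [Finset.insert_subset_iff]) hc.2.1,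
      hside _ (by simp [Finset.insert_subset_iff]) hc.2.2⟩
  obtain ⟨c₀, hc₀⟩ := T.exists_isApex hg
  refine ⟨preserve c, fun hc => ?_⟩
  rwa [hc.unique (preserve c₀ hc₀)]

end Flips

/-- The diagonal set obtained from `D` by performing every flip `f.1 ↦ f.2` with `f ∈ S`. -/
def flipAll {α : Type*} [DecidableEq α] (D : Finset α) (S : Finset (α × α)) : Finset α :=
  D \ S.image Prod.fst ∪ S.image Prod.snd

section FlipAll

variable {α : Type*} [DecidableEq α] {D : Finset α} {S : Finset (α × α)}

@[simp]
theorem flipAll_empty (D : Finset α) : flipAll D ∅ = D := by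
  simp [flipAll]

theorem flipAll_insert {f : α × α} (hf : f.2 ∉ S.image Prod.fst) :
    flipAll D (insert f S) = flipAll (insert f.2 (D.erase f.1)) S := by
  ext z
  have hz : z = f.2 → z ∉ S.image Prod.fst := fun h => h ▸ hf
  simp only [flipAll, Finset.image_insert, Finset.mem_union, Finset.mem_sdiff,
    Finset.mem_insert, Finset.mem_erase]
  tauto

theorem flipAll_insert_erase {f f' : α} (hf₁ : f ∉ S.image Prod.fst)
    (hf₂ : f ∉ S.image Prod.snd) (hf'₁ : f' ∉ S.image Prod.fst) :
    flipAll (insert f' (D.erase f)) S = insert f' ((flipAll D S).erase f) := by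
  ext z
  have hz₁ : z = f → z ∉ S.image Prod.fst := fun h => h ▸ hf₁
  have hz₂ : z = f → z ∉ S.image Prod.snd := fun h => h ▸ hf₂
  have hz₃ : z = f' → z ∉ S.image Prod.fst := fun h => h ▸ hf'₁
  simp only [flipAll, Finset.mem_union, Finset.mem_sdiff, Finset.mem_insert, Finset.mem_erase]
  tauto

end FlipAll

section IndependentFlips

variable {m : ℕ} {T T' : Triangulation m}

theorem IsFlip.flipAll {f f' : Finset (Fin m)} (hf : IsFlip m T T' f f')
    {S : Finset (Finset (Fin m) × Finset (Fin m))}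
    (hS : ∀ g ∈ S, g.1 ∈ T.diagonals ∧ g.1 ∈ T'.diagonals ∧ g.2 ∉ T.diagonals ∧
      g.2 ∉ T'.diagonals)
    {U U' : Triangulation m} (hU : U.diagonals = flipAll T.diagonals S)
    (hU' : U'.diagonals = flipAll T'.diagonals S) : IsFlip m U U' f f' := by
  have hf₁ : f ∉ S.image Prod.fst := by
    simp only [Finset.mem_image]
    rintro ⟨g, hg, rfl⟩
    exact hf.symm.2.1 (hS g hg).2.1
  have hf₂ : f ∉ S.image Prod.snd := by
    simp only [Finset.mem_image]
    rintro ⟨g, hg, rfl⟩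
    exact (hS g hg).2.2.1 hf.1
  have hf'₁ : f' ∉ S.image Prod.fst := by
    simp only [Finset.mem_image]
    rintro ⟨g, hg, rfl⟩
    exact hf.2.1 (hS g hg).1
  have hf'₂ : f' ∉ S.image Prod.snd := by
    simp only [Finset.mem_image]
    rintro ⟨g, hg, rfl⟩
    exact (hS g hg).2.2.2 hf.snd_mem
  refine ⟨?_, ?_, ?_⟩
  · rw [hU, _root_.flipAll]
    exact Finset.mem_union_left _ (Finset.mem_sdiff.mpr ⟨hf.1, hf₁⟩)
  · rw [hU, _root_.flipAll, Finset.mem_union, Finset.mem_sdiff]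
    exact fun h => h.elim (fun h => hf.2.1 h.1) hf'₂
  · rw [hU', hU, hf.2.2, flipAll_insert_erase hf₁ hf₂ hf'₁]

namespace Triangulation

def IndepFlips (T : Triangulation m) (S : Set (Finset (Fin m) × Finset (Fin m))) : Prop :=
  (∀ f ∈ S, f.1 ∈ T.diagonals ∧ T.IsOpposite f.1 f.2) ∧
    S.Pairwise fun f g => ¬ Neighbor m T f.1 g.1

variable {S S' : Set (Finset (Fin m) × Finset (Fin m))}

theorem IndepFlips.mono (h : T.IndepFlips S) (hS' : S' ⊆ S) : T.IndepFlips S' :=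
  ⟨fun f hf => h.1 f (hS' hf), h.2.mono hS'⟩

theorem IndepFlips.of_isFlip {f : Finset (Fin m) × Finset (Fin m)} (h : T.IndepFlips (insert f S))
    (hfS : f ∉ S) (hf : IsFlip m T T' f.1 f.2) : T'.IndepFlips S := by
  obtain ⟨hmem, hpw⟩ := h
  rw [Set.pairwise_insert_of_notMem hfS] at hpw
  have hsame : ∀ g ∈ S, T.SameApexes T' g.1 := fun g hg =>
    hf.sameApexes (hmem g (Set.mem_insert_of_mem _ hg)).1 (hpw.2 g hg).1
  refine ⟨fun g hg => ⟨?_, (hsame g hg).isOpposite (hmem g (Set.mem_insert_of_mem _ hg)).2⟩,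
    fun g hg g' hg' hne hn => hpw.1 hg hg' hne ?_⟩
  · refine hf.mem_of_ne (hmem g (Set.mem_insert_of_mem _ hg)).1 fun h => (hpw.2 g hg).1 ?_
    exact h ▸ neighbor_self (hmem g (Set.mem_insert_of_mem _ hg)).1
  · exact (hsame g' hg').symm.neighbor (hmem g' (Set.mem_insert_of_mem _ hg')).1 hn

theorem IndepFlips.fst_mem_and_snd_not_mem (h : T.IndepFlips S)
    {f : Finset (Fin m) × Finset (Fin m)} (hf : f ∈ S) :
    f.1 ∈ T.diagonals ∧ f.2 ∉ T.diagonals :=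
  ⟨(h.1 f hf).1, (h.1 f hf).2.not_mem (h.1 f hf).1⟩

end Triangulation

theorem IsFlip.exists_isFlipSeq_one {e e' : Finset (Fin m)} (hf : IsFlip m T T' e e') :
    ∃ G Vs, IsFlipSeq m 1 G Vs ∧ Vs 0 = T ∧ Vs 1 = T' ∧ G 0 = (e, e') :=
  ⟨fun _ => (e, e'), fun j => if j = 0 then T else T', fun j hj => by
    obtain rfl : j = 0 := by omega
    simpa using hf, rfl, rfl, rfl⟩

theorem IsFlipSeq.append {a b : ℕ} {G₁ G₂ : ℕ → Finset (Fin m) × Finset (Fin m)}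
    {Vs₁ Vs₂ : ℕ → Triangulation m} (h₁ : IsFlipSeq m a G₁ Vs₁)
    (h₂ : IsFlipSeq m b G₂ Vs₂) (h : Vs₁ a = Vs₂ 0) :
    ∃ G Vs, IsFlipSeq m (a + b) G Vs ∧ Vs 0 = Vs₁ 0 ∧ Vs (a + b) = Vs₂ b ∧
      (∀ j < a, G j = G₁ j) ∧ ∀ j < b, G (a + j) = G₂ j := by
  set Vs := fun j => if j ≤ a then Vs₁ j else Vs₂ (j - a)
  have hVs : ∀ j, a ≤ j → Vs j = Vs₂ (j - a) := by
    intro j hj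
    simp only [Vs]
    split_ifs with hja
    · rw [show j = a by omega, h, Nat.sub_self]
    · rfl
  refine ⟨fun j => if j < a then G₁ j else G₂ (j - a), Vs, fun j hj => ?_, by simp [Vs],
    by rw [hVs _ (by omega), Nat.add_sub_cancel_left], fun j hj => if_pos hj,
    fun j _ => by simp⟩
  by_cases hja : j < a
  · simpa [Vs, hja, hja.le, Nat.succ_le_of_lt hja] using h₁ j hja
  · simp only [hVs j (by omega), hVs (j + 1) (by omega), if_neg hja,
      show j + 1 - a = j - a + 1 by omega]
    exact h₂ _ (by omega)

theorem Triangulation.IndepFlips.exists_isFlipSeq (L : List (Finset (Fin m) × Finset (Fin m)))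
    (hL : L.Nodup) (h : T.IndepFlips {f | f ∈ L}) :
    ∃ G Vs, IsFlipSeq m L.length G Vs ∧ Vs 0 = T ∧
      (Vs L.length).diagonals = flipAll T.diagonals L.toFinset ∧
      ∀ j (hj : j < L.length), G j = L[j] := by
  induction L generalizing T with
  | nil =>
    exact ⟨fun _ => (∅, ∅), fun _ => T, fun j hj => absurd hj (Nat.not_lt_zero j), rfl,
      by simp, fun j hj => absurd hj (Nat.not_lt_zero j)⟩
  | cons f L ih =>
    obtain ⟨hfL, hL⟩ := List.nodup_cons.mp hL
    have hset : {g | g ∈ f :: L} = insert f {g | g ∈ L} := by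
      ext g; simp
    rw [hset] at h
    obtain ⟨hfT, hfopp⟩ := h.1 f (Set.mem_insert _ _)
    obtain ⟨T₁, hf⟩ := hfopp.exists_isFlip hfT
    obtain ⟨G₁, Vs₁, hseq₁, h₁0, h₁1, hG₁⟩ := hf.exists_isFlipSeq_one
    obtain ⟨G₂, Vs₂, hseq₂, h₂0, h₂end, hG₂⟩ := ih hL (h.of_isFlip hfL hf)
    obtain ⟨G, Vs, hseq, h0, hend, hG, hG'⟩ := hseq₁.append hseq₂ (h₁1.trans h₂0.symm)
    rw [Nat.add_comm] at hseq hend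
    refine ⟨G, Vs, hseq, h0.trans h₁0, ?_, ?_⟩
    · have hf₂ : f.2 ∉ L.toFinset.image Prod.fst := by
        simp only [Finset.mem_image, List.mem_toFinset]
        rintro ⟨g, hg, hgf⟩
        exact (h.fst_mem_and_snd_not_mem (Set.mem_insert _ _)).2
          (hgf ▸ (h.1 g (Set.mem_insert_of_mem _ hg)).1)
      rw [List.length_cons, hend, h₂end, hf.2.2, List.toFinset_cons, flipAll_insert hf₂]
    · rintro (_ | j) hj
      · rw [hG 0 Nat.one_pos, hG₁]
        rfl
      · have hj' : j < L.length := by simpa using hj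
        calc G (j + 1) = G (1 + j) := by rw [Nat.add_comm]
          _ = L[j] := (hG' j hj').trans (hG₂ j hj')

theorem Triangulation.IndepFlips.exists_flipAll {S : Finset (Finset (Fin m) × Finset (Fin m))}
    (h : T.IndepFlips S) : ∃ T' : Triangulation m, T'.diagonals = flipAll T.diagonals S := by
  obtain ⟨-, Vs, -, -, hend, -⟩ := Triangulation.IndepFlips.exists_isFlipSeq S.toList
    (Finset.nodup_toList S) (by simpa using h)
  exact ⟨_, by rw [hend, Finset.toList_toFinset]⟩

end IndependentFlips

/-- The flips of `P` that are still pending at time `i`. -/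
def pendingFlips {α : Type*} [DecidableEq α] (F : ℕ → α) (P : Finset ℕ) (i : ℕ) :
    Finset α :=
  (P.filter (i ≤ ·)).image F

section Sources

variable {m r : ℕ} {F : ℕ → Finset (Fin m) × Finset (Fin m)} {Ts : ℕ → Triangulation m}

theorem IsFlipSeq.exists_created (hseq : IsFlipSeq m r F Ts) {g : Finset (Fin m)} {a b : ℕ}
    (hab : a ≤ b) (hbr : b ≤ r) (ha : g ∉ (Ts a).diagonals) (hb : g ∈ (Ts b).diagonals) :
    ∃ j, a ≤ j ∧ j < b ∧ (F j).2 = g := by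
  induction b, hab using Nat.le_induction with
  | base => exact absurd hb ha
  | succ b hab ih =>
    by_cases hg : g ∈ (Ts b).diagonals
    · obtain ⟨j, hj, hjb, rfl⟩ := ih (by omega) hg
      exact ⟨j, hj, by omega, rfl⟩
    · refine ⟨b, hab, by omega, ?_⟩
      rw [(hseq b (by omega)).2.2, Finset.mem_insert] at hb
      exact (hb.resolve_right fun h => hg (Finset.mem_of_mem_erase h)).symm

theorem IsFlipSeq.not_neighbor_of_isSource (hseq : IsFlipSeq m r F Ts) {a k : ℕ}
    (hk : IsSource m r F Ts k) (hak : a ≤ k) {g : Finset (Fin m)}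
    (hg : g ∉ (Ts a).diagonals) : ¬ Neighbor m (Ts k) g (F k).1 := fun hn => by
  obtain ⟨j, -, hjk, rfl⟩ := hseq.exists_created hak hk.1.le hg hn.1
  exact hk.2 j ⟨hjk, hk.1, hn⟩

theorem IsFlipSeq.mem_of_isSource (hseq : IsFlipSeq m r F Ts) {i k : ℕ}
    (hk : IsSource m r F Ts k) (hik : i ≤ k) : (F k).1 ∈ (Ts i).diagonals := by
  by_contra h
  exact hseq.not_neighbor_of_isSource hk hik h (neighbor_self (hseq k hk.1).1)

theorem IsFlipSeq.fst_ne_of_isSource (hseq : IsFlipSeq m r F Ts) {j k : ℕ}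
    (hk : IsSource m r F Ts k) (hjk : j < k) : (F j).1 ≠ (F k).1 := fun h =>
  (hseq j (hjk.trans hk.1)).symm.2.1 (h ▸ hseq.mem_of_isSource hk hjk)

theorem IsFlipSeq.sameApexes_of_isSource (hseq : IsFlipSeq m r F Ts) {i k : ℕ}
    (hk : IsSource m r F Ts k) (hik : i ≤ k) : (Ts i).SameApexes (Ts k) (F k).1 := by
  induction hik using Nat.decreasingInduction with
  | self => exact fun _ _ _ _ => Iff.rfl
  | of_succ i hi ih =>
    have hflip := (hseq i (hi.trans hk.1)).symm
    refine (hflip.sameApexes (hseq.mem_of_isSource hk hi) fun hn => ?_).symm.trans ih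
    exact hseq.not_neighbor_of_isSource hk hi.le (hseq i (hi.trans hk.1)).2.1
      (ih.neighbor (hseq k hk.1).1 hn)

theorem IsFlipSeq.indepFlips_sources (hseq : IsFlipSeq m r F Ts) (i : ℕ) :
    (Ts i).IndepFlips (F '' {k | IsSource m r F Ts k ∧ i ≤ k}) := by
  have indep : ∀ j k, IsSource m r F Ts j → IsSource m r F Ts k → j < k → i ≤ j →
      ¬ Neighbor m (Ts i) (F j).1 (F k).1 := fun j k hj hk hjk hij hn =>
    hseq.not_neighbor_of_isSource hk hjk (hseq j hj.1).symm.2.1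
      ((hseq.sameApexes_of_isSource hk (hij.trans hjk.le)).neighbor (hseq k hk.1).1 hn)
  refine ⟨?_, ?_⟩
  · rintro _ ⟨k, ⟨hk, hik⟩, rfl⟩
    exact ⟨hseq.mem_of_isSource hk hik,
      (hseq.sameApexes_of_isSource hk hik).symm.isOpposite (hseq k hk.1).isOpposite⟩
  · rintro _ ⟨j, ⟨hj, hij⟩, rfl⟩ _ ⟨k, ⟨hk, hik⟩, rfl⟩ hne
    rcases lt_trichotomy j k with hjk | rfl | hkj
    · exact indep j k hj hk hjk hij
    · exact absurd rfl hne
    · exact fun hn => indep k j hk hj hkj hik hn.symm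

theorem IsFlipSeq.indepFlips_pendingFlips (hseq : IsFlipSeq m r F Ts) {P : Finset ℕ}
    (hP : ∀ k ∈ P, IsSource m r F Ts k) (i : ℕ) :
    (Ts i).IndepFlips ↑(pendingFlips F P i) :=
  (hseq.indepFlips_sources i).mono fun _ hf => by
    obtain ⟨k, hk, rfl⟩ := Finset.mem_image.mp hf
    obtain ⟨hkP, hik⟩ := Finset.mem_filter.mp hk
    exact ⟨k, ⟨hP k hkP, hik⟩, rfl⟩

theorem IsFlipSeq.flipAll_pendingFlips_succ (hseq : IsFlipSeq m r F Ts) {P : Finset ℕ}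
    (hP : ∀ k ∈ P, IsSource m r F Ts k) {i : ℕ}
    (hi : i ∈ P) :
    flipAll (Ts i).diagonals (pendingFlips F P i) =
      flipAll (Ts (i + 1)).diagonals (pendingFlips F P (i + 1)) := by
  have hpend : pendingFlips F P i = insert (F i) (pendingFlips F P (i + 1)) := by
    ext f
    simp only [pendingFlips, Finset.mem_image, Finset.mem_filter, Finset.mem_insert]
    constructor
    · rintro ⟨k, ⟨hkP, hik⟩, rfl⟩
      rcases hik.eq_or_lt with rfl | hik
      · exact Or.inl rfl
      · exact Or.inr ⟨k, ⟨hkP, hik⟩, rfl⟩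
    · rintro (rfl | ⟨k, ⟨hkP, hik⟩, rfl⟩)
      · exact ⟨i, ⟨hi, le_rfl⟩, rfl⟩
      · exact ⟨k, ⟨hkP, by omega⟩, rfl⟩
  have hind := hseq.indepFlips_pendingFlips hP i
  rw [hpend, flipAll_insert, (hseq i (hP i hi).1).2.2]
  simp only [Finset.mem_image]
  rintro ⟨g, hg, hgi⟩
  refine (hind.fst_mem_and_snd_not_mem (hpend ▸ Finset.mem_insert_self _ _)).2 ?_
  exact hgi ▸ (hind.fst_mem_and_snd_not_mem (hpend ▸ Finset.mem_insert_of_mem hg)).1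

theorem IsFlipSeq.isFlip_flipAll_pendingFlips (hseq : IsFlipSeq m r F Ts) {P : Finset ℕ}
    (hP : ∀ k ∈ P, IsSource m r F Ts k) {i : ℕ}
    (hir : i < r) (hi : i ∉ P)
    {U U' : Triangulation m} (hU : U.diagonals = flipAll (Ts i).diagonals (pendingFlips F P i))
    (hU' : U'.diagonals = flipAll (Ts (i + 1)).diagonals (pendingFlips F P (i + 1))) :
    IsFlip m U U' (F i).1 (F i).2 := by
  have hpend : pendingFlips F P (i + 1) = pendingFlips F P i := by
    ext f
    simp only [pendingFlips, Finset.mem_image, Finset.mem_filter]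
    refine exists_congr fun k => and_congr_left fun _ => and_congr_right fun hkP => ?_
    have : k ≠ i := fun h => hi (h ▸ hkP)
    omega
  rw [hpend] at hU'
  refine (hseq i hir).flipAll (fun g hg => ?_) hU hU'
  have h₀ := (hseq.indepFlips_pendingFlips hP i).fst_mem_and_snd_not_mem hg
  have h₁ := (hseq.indepFlips_pendingFlips hP (i + 1)).fst_mem_and_snd_not_mem
    (hpend.symm ▸ hg)
  exact ⟨h₀.1, h₁.1, h₀.2, h₁.2⟩

theorem IsFlipSeq.exists_isFlipSeq_of_pendingFlips (hseq : IsFlipSeq m r F Ts) {P : Finset ℕ}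
    (hP : ∀ k ∈ P, IsSource m r F Ts k)
    {V : Triangulation m}
    (hV : V.diagonals = flipAll (Ts 0).diagonals (P.image F)) :
    ∃ n G Vs, n + P.card = r ∧ IsFlipSeq m n G Vs ∧ Vs 0 = V ∧ Vs n = Ts r := by
  classical
  have key : ∀ i ≤ r, ∃ n G Vs, n + Nat.count (· ∈ P) i = i ∧ IsFlipSeq m n G Vs ∧
      Vs 0 = V ∧ (Vs n).diagonals = flipAll (Ts i).diagonals (pendingFlips F P i) := by
    intro i hir
    induction i with
    | zero =>
      refine ⟨0, fun _ => (∅, ∅), fun _ => V, by simp, fun j hj => absurd hj (by omega), rfl,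
        ?_⟩
      simp [hV, pendingFlips]
    | succ i ih =>
      obtain ⟨n, G, Vs, hn, hseqV, hV0, hVn⟩ := ih (by omega)
      by_cases hi : i ∈ P
      · refine ⟨n, G, Vs, by simp [Nat.count_succ, hi]; omega, hseqV, hV0, ?_⟩
        rw [hVn, hseq.flipAll_pendingFlips_succ hP hi]
      · obtain ⟨U, hU⟩ := (hseq.indepFlips_pendingFlips hP (i + 1)).exists_flipAll
        obtain ⟨G₁, Vs₁, hseq₁, h₁0, h₁1, -⟩ :=
          (hseq.isFlip_flipAll_pendingFlips hP (by omega) hi hVn hU).exists_isFlipSeq_one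
        obtain ⟨G', Vs', hseq', h0', hend', -⟩ := hseqV.append hseq₁ h₁0.symm
        exact ⟨n + 1, G', Vs', by simp [Nat.count_succ, hi]; omega, hseq', h0'.trans hV0,
          by rw [hend', h₁1, hU]⟩
  obtain ⟨n, G, Vs, hn, hseqV, hV0, hVr⟩ := key r le_rfl
  have hcount : Nat.count (· ∈ P) r = P.card := by
    rw [Nat.count_eq_card_filter_range, Finset.filter_mem_eq_inter,
      Finset.inter_eq_right.mpr fun k hk => Finset.mem_range.mpr (hP k hk).1]
  have hpend : pendingFlips F P r = ∅ := by
    simp only [pendingFlips, Finset.image_eq_empty, Finset.filter_eq_empty_iff, not_le]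
    exact fun k hk => (hP k hk).1
  exact ⟨n, G, Vs, hcount ▸ hn, hseqV, hV0,
    Triangulation.ext (by rw [hVr, hpend, flipAll_empty])⟩

theorem IsFlipSeq.exists_sources_first (hseq : IsFlipSeq m r F Ts) (L : List ℕ) (hL : L.Nodup)
    (hsrc : ∀ k ∈ L, IsSource m r F Ts k) :
    ∃ F' Ts', IsFlipSeq m r F' Ts' ∧ Ts' 0 = Ts 0 ∧ Ts' r = Ts r ∧
      ∀ j (hj : j < L.length), F' j = F L[j] := by
  classical
  have hinj : ∀ j ∈ L, ∀ k ∈ L, F j = F k → j = k := by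
    intro j hj k hk hjk
    rcases lt_trichotomy j k with h | h | h
    · exact absurd (congrArg Prod.fst hjk) (hseq.fst_ne_of_isSource (hsrc k hk) h)
    · exact h
    · exact absurd (congrArg Prod.fst hjk).symm (hseq.fst_ne_of_isSource (hsrc j hj) h)
  have hindep : (Ts 0).IndepFlips {f | f ∈ L.map F} :=
    (hseq.indepFlips_sources 0).mono fun _ hf => by
      obtain ⟨k, hk, rfl⟩ := List.mem_map.mp hf
      exact ⟨k, ⟨hsrc k hk, Nat.zero_le k⟩, rfl⟩
  obtain ⟨G₁, Vs₁, hseq₁, h₁0, h₁end, hG₁⟩ :=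
    Triangulation.IndepFlips.exists_isFlipSeq _ (hL.map_on hinj) hindep
  obtain ⟨n, G₂, Vs₂, hn, hseq₂, h₂0, h₂end⟩ :=
    hseq.exists_isFlipSeq_of_pendingFlips (P := L.toFinset) (by simpa using hsrc)
      (V := Vs₁ (L.map F).length) (by rw [h₁end]; congr 1; ext; simp)
  obtain ⟨G, Vs, hseqG, h0, hend, hG, -⟩ := hseq₁.append hseq₂ h₂0.symm
  have hlen : (L.map F).length + n = r := by
    rw [List.length_map, ← hn, List.toFinset_card_of_nodup hL]; omega
  rw [hlen] at hseqG hend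
  refine ⟨G, Vs, hseqG, h0.trans h₁0, hend.trans h₂end, fun j hj => ?_⟩
  rw [hG j (by simpa using hj), hG₁ j (by simpa using hj), List.getElem_map]

end Sources

theorem sources_form_safe_set_general (m : ℕ)
    (Tinit Tfinal : Triangulation m)
    (r : ℕ) (F : ℕ → Finset (Fin m) × Finset (Fin m)) (Ts : ℕ → Triangulation m)
    (hseq : IsFlipSeq m r F Ts) (h0 : Ts 0 = Tinit) (hr : Ts r = Tfinal)
    (l : ℕ) (s : Fin l → ℕ) (hinj : Function.Injective s)
    (hsrc : ∀ p : Fin l, IsSource m r F Ts (s p))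
    (τ : Equiv.Perm (Fin l)) :
    ∃ (F' : ℕ → Finset (Fin m) × Finset (Fin m)) (Ts' : ℕ → Triangulation m),
      IsFlipSeq m r F' Ts' ∧ Ts' 0 = Tinit ∧ Ts' r = Tfinal ∧
      ∀ p : Fin l, (F' p.val).1 = (F (s (τ p))).1 := by
  subst h0 hr
  obtain ⟨F', Ts', hseq', h0, hr, hF'⟩ := hseq.exists_sources_first (List.ofFn (s ∘ τ))
    (List.nodup_ofFn.mpr (hinj.comp τ.injective))
    (fun k hk => by obtain ⟨p, rfl⟩ := List.mem_ofFn.mp hk; exact hsrc (τ p))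
  exact ⟨F', Ts', hseq', h0, hr, fun p => by rw [hF' p (by simp)]; simp⟩

/-- Let `F` be a flip sequence realizing a shortest path from `Tinit` to
`Tfinal`, let `s 0, …, s (l-1)` enumerate (without repetition) the source
nodes of the DAG `D_F`, and let `I = {(F (s 0)).1, …, (F (s (l-1))).1}` be
their underlying diagonals in `Tinit`. Then for every permutation `τ` of `I`
there exists a shortest path from `Tinit` to `Tfinal` whose first `l` flips
flip exactly the diagonals of `I`, in the order given by `τ`. In other words,
`I` is a safe-set. -/
theorem sources_form_safe_set (m : ℕ) (hm : 3 ≤ m)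
    (Tinit Tfinal : Triangulation m)
    (r : ℕ) (F : ℕ → Finset (Fin m) × Finset (Fin m)) (Ts : ℕ → Triangulation m)
    (hseq : IsFlipSeq m r F Ts) (h0 : Ts 0 = Tinit) (hr : Ts r = Tfinal)
    (hmin : r = FlipDist m Tinit Tfinal)
    (l : ℕ) (s : Fin l → ℕ) (hinj : Function.Injective s)
    (hsrc : ∀ p : Fin l, IsSource m r F Ts (s p))
    (hall : ∀ i : ℕ, IsSource m r F Ts i → ∃ p : Fin l, s p = i)
    (τ : Equiv.Perm (Fin l)) :
    ∃ (F' : ℕ → Finset (Fin m) × Finset (Fin m)) (Ts' : ℕ → Triangulation m),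
      IsFlipSeq m r F' Ts' ∧ Ts' 0 = Tinit ∧ Ts' r = Tfinal ∧
      ∀ p : Fin l, (F' p.val).1 = (F (s (τ p))).1 :=
  sources_form_safe_set_general m Tinit Tfinal r F Ts hseq h0 hr l s hinj hsrc τ
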